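/- arXiv:1809.06468 — 2 statements merged into one kernel-verified Lean document; each statement's English description precedes it below -/
import Mathlib

section
/- For every δ > 0 and every k ∈ ℕ there is a constant A = A(δ, k) such that for all integers Q ≥ 1 and all k-tuples (q_1, …, q_k) of integers with Q ≤ q_j < 2Q for each j, one has Σ_{n=1}^{L} Π_{j=1}^k gcd(q_j, n) ≤ A · Q^{k(1+δ)}, where L = lcm(q_1, …, q_k). -/
/-!
Sorting `n` by the tuple `d = (gcd(q_j, n))_j`: every `n` in the fibre of `d` is a multiple of
`lcm d`, and `lcm q ∣ lcm d · ∏ (q_j / d_j)`, so each fibre has at most `∏ (q_j / d_j)` elements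
and contributes at most `∏ q_j`. Hence the sum is at most `∏ τ(q_j) q_j`, and the divisor bound
`τ(q) ≪_δ q^δ` together with `q_j < 2Q` gives the claim.
-/

open Finset

namespace Nat

lemma succ_le_pow_of_two_le {b : ℝ} (hb : 2 ≤ b) (e : ℕ) : (e + 1 : ℝ) ≤ b ^ e :=
  calc (e + 1 : ℝ) ≤ 2 ^ e := by exact_mod_cast Nat.lt_two_pow_self
    _ ≤ b ^ e := pow_le_pow_left₀ zero_le_two hb e

lemma exists_succ_le_mul_two_rpow {δ : ℝ} (hδ : 0 < δ) :
    ∃ C : ℝ, 1 ≤ C ∧ ∀ e : ℕ, (e + 1 : ℝ) ≤ C * 2 ^ (δ * e) := by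
  set c := δ * Real.log 2
  have hc : 0 < c := mul_pos hδ (Real.log_pos one_lt_two)
  refine ⟨max 1 c⁻¹, le_max_left _ _, fun e ↦ ?_⟩
  have hexp : 1 + c * e ≤ 2 ^ (δ * e) := by
    rw [Real.rpow_def_of_pos two_pos]
    linarith [Real.add_one_le_exp (Real.log 2 * (δ * e))]
  have hMc : 1 ≤ max 1 c⁻¹ * c :=
    inv_mul_cancel₀ hc.ne' ▸ mul_le_mul_of_nonneg_right (le_max_right _ _) hc.le
  calc (e + 1 : ℝ) ≤ max 1 c⁻¹ * (1 + c * e) := by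
        nlinarith [le_max_left 1 c⁻¹, mul_nonneg (sub_nonneg.2 hMc) (Nat.cast_nonneg (α := ℝ) e)]
    _ ≤ max 1 c⁻¹ * 2 ^ (δ * e) := by gcongr

/-- Small primes cost a factor `C`; primes `p > 2 ^ (1 / δ)` satisfy `p ^ δ ≥ 2` and cost nothing. -/
lemma succ_le_ite_mul_rpow {δ C : ℝ} (hδ : 0 < δ) (hC : ∀ e : ℕ, (e + 1 : ℝ) ≤ C * 2 ^ (δ * e))
    {p : ℕ} (hp : 2 ≤ p) (e : ℕ) :
    (e + 1 : ℝ) ≤ (if p ≤ ⌈(2 : ℝ) ^ δ⁻¹⌉₊ then C else 1) * p ^ (δ * e) := by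
  split_ifs with hpN
  · have hC0 : 0 ≤ C := zero_le_one.trans (by simpa using hC 0)
    calc (e + 1 : ℝ) ≤ C * 2 ^ (δ * e) := hC e
      _ ≤ C * p ^ (δ * e) := by gcongr; exact_mod_cast hp
  · have hpδ : (2 : ℝ) ≤ (p : ℝ) ^ δ :=
      calc (2 : ℝ) = ((2 : ℝ) ^ δ⁻¹) ^ δ := (Real.rpow_inv_rpow zero_le_two hδ.ne').symm
        _ ≤ (p : ℝ) ^ δ := by
          gcongr
          exact (Nat.le_ceil _).trans (by exact_mod_cast (not_le.1 hpN).le)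
    rw [one_mul, Real.rpow_mul_natCast (Nat.cast_nonneg p)]
    exact succ_le_pow_of_two_le hpδ e

lemma prod_ite_le_pow {C : ℝ} (hC : 1 ≤ C) (s : Finset ℕ) (N : ℕ) :
    ∏ p ∈ s, (if p ≤ N then C else 1) ≤ C ^ (N + 1) := by
  rw [prod_ite, prod_const, prod_const_one, mul_one]
  refine pow_le_pow_right₀ hC ?_
  calc #{p ∈ s | p ≤ N} ≤ #(range (N + 1)) :=
        card_le_card fun p hp ↦ mem_range.2 (Nat.lt_succ_of_le (mem_filter.1 hp).2)
    _ = N + 1 := card_range _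

lemma cast_rpow_eq_prod_primeFactors {n : ℕ} (hn : n ≠ 0) (δ : ℝ) :
    (n : ℝ) ^ δ = ∏ p ∈ n.primeFactors, (p : ℝ) ^ (δ * n.factorization p) := by
  conv_lhs => rw [← Nat.prod_factorization_pow_eq_self hn]
  rw [Nat.prod_factorization_eq_prod_primeFactors, Nat.cast_prod,
    ← Real.finsetProd_rpow _ _ fun p _ ↦ by positivity]
  refine prod_congr rfl fun p _ ↦ ?_
  rw [Nat.cast_pow, ← Real.rpow_natCast, ← Real.rpow_mul (Nat.cast_nonneg p), mul_comm]

theorem card_divisors_le_mul_rpow {δ : ℝ} (hδ : 0 < δ) :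
    ∃ C : ℝ, 0 < C ∧ ∀ n : ℕ, n ≠ 0 → (#n.divisors : ℝ) ≤ C * (n : ℝ) ^ δ := by
  obtain ⟨C, hC1, hC⟩ := exists_succ_le_mul_two_rpow hδ
  set N := ⌈(2 : ℝ) ^ δ⁻¹⌉₊
  refine ⟨C ^ (N + 1), by positivity, fun n hn ↦ ?_⟩
  calc (#n.divisors : ℝ) = ∏ p ∈ n.primeFactors, ((n.factorization p : ℝ) + 1) := by
        rw [Nat.card_divisors hn]; push_cast; rfl
    _ ≤ ∏ p ∈ n.primeFactors, (if p ≤ N then C else 1) * (p : ℝ) ^ (δ * n.factorization p) :=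
        prod_le_prod (fun _ _ ↦ by positivity) fun p hp ↦
          succ_le_ite_mul_rpow hδ hC (Nat.prime_of_mem_primeFactors hp).two_le _
    _ = (∏ p ∈ n.primeFactors, if p ≤ N then C else 1) *
          ∏ p ∈ n.primeFactors, (p : ℝ) ^ (δ * n.factorization p) := prod_mul_distrib
    _ ≤ C ^ (N + 1) * (n : ℝ) ^ δ := by
        rw [cast_rpow_eq_prod_primeFactors hn]
        gcongr
        exact prod_ite_le_pow hC1 _ N

end Nat

section GcdSum

variable {ι : Type*} [Fintype ι]

lemma lcm_dvd_lcm_mul_prod_div {q d : ι → ℕ} (hdq : ∀ j, d j ∣ q j) :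
    univ.lcm q ∣ univ.lcm d * ∏ j, q j / d j :=
  Finset.lcm_dvd fun j _ ↦ by
    rw [← Nat.mul_div_cancel' (hdq j)]
    exact mul_dvd_mul (dvd_lcm (mem_univ j)) (dvd_prod_of_mem _ (mem_univ j))

lemma card_filter_gcd_eq_le {q d : ι → ℕ} (hq : ∀ j, q j ≠ 0) (hdq : ∀ j, d j ∣ q j) :
    #{n ∈ Icc 1 (univ.lcm q) | (fun j ↦ (q j).gcd n) = d} ≤ ∏ j, q j / d j := by
  have hd : ∀ j, d j ≠ 0 := fun j h ↦ hq j (Nat.eq_zero_of_zero_dvd (h ▸ hdq j))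
  have hm : 0 < univ.lcm d := Nat.pos_of_ne_zero (lcm_eq_zero_iff.not.2 (by simpa using hd))
  have hprod : 0 < ∏ j, q j / d j :=
    prod_pos fun j _ ↦ Nat.div_pos (Nat.le_of_dvd (Nat.pos_of_ne_zero (hq j)) (hdq j))
      (Nat.pos_of_ne_zero (hd j))
  calc #{n ∈ Icc 1 (univ.lcm q) | (fun j ↦ (q j).gcd n) = d}
      ≤ #{n ∈ Ioc 0 (univ.lcm q) | univ.lcm d ∣ n} := by
        refine card_le_card fun n hn ↦ ?_
        obtain ⟨hnL, hgcd⟩ := mem_filter.1 hn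
        refine mem_filter.2 ⟨by simpa [Nat.lt_iff_add_one_le] using mem_Icc.1 hnL, ?_⟩
        exact Finset.lcm_dvd fun j _ ↦ congrFun hgcd j ▸ Nat.gcd_dvd_right (q j) n
    _ = univ.lcm q / univ.lcm d := Nat.Ioc_filter_dvd_card_eq_div _ _
    _ ≤ ∏ j, q j / d j :=
        Nat.div_le_of_le_mul (Nat.le_of_dvd (Nat.mul_pos hm hprod) (lcm_dvd_lcm_mul_prod_div hdq))

theorem sum_prod_gcd_le [DecidableEq ι] {q : ι → ℕ} (hq : ∀ j, q j ≠ 0) :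
    ∑ n ∈ Icc 1 (univ.lcm q), ∏ j, (q j).gcd n ≤ (∏ j, #(q j).divisors) * ∏ j, q j := by
  have hmaps : ∀ n ∈ Icc 1 (univ.lcm q),
      (fun j ↦ (q j).gcd n) ∈ Fintype.piFinset fun j ↦ (q j).divisors :=
    fun n _ ↦ Fintype.mem_piFinset.2 fun j ↦ Nat.mem_divisors.2 ⟨Nat.gcd_dvd_left _ _, hq j⟩
  rw [← sum_fiberwise_of_maps_to hmaps, ← Fintype.card_piFinset, ← smul_eq_mul]
  refine sum_le_card_nsmul _ _ _ fun d hd ↦ ?_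
  have hdq : ∀ j, d j ∣ q j := fun j ↦ Nat.dvd_of_mem_divisors (Fintype.mem_piFinset.1 hd j)
  calc ∑ n ∈ Icc 1 (univ.lcm q) with (fun j ↦ (q j).gcd n) = d, ∏ j, (q j).gcd n
      = #{n ∈ Icc 1 (univ.lcm q) | (fun j ↦ (q j).gcd n) = d} * ∏ j, d j := by
        rw [← smul_eq_mul, ← sum_const]
        exact sum_congr rfl fun n hn ↦ prod_congr rfl fun j _ ↦ congrFun (mem_filter.1 hn).2 j
    _ ≤ (∏ j, q j / d j) * ∏ j, d j := Nat.mul_le_mul_right _ (card_filter_gcd_eq_le hq hdq)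
    _ = ∏ j, q j := by
        rw [← prod_mul_distrib]
        exact prod_congr rfl fun j _ ↦ Nat.div_mul_cancel (hdq j)

end GcdSum

/-- For all `δ > 0` and `k ∈ ℕ` there is `A = A(δ,k)` such that for all `Q ≥ 1` and
all tuples `(q_1,…,q_k)` with `Q ≤ q_j < 2Q`,
`Σ_{n=1}^{L} Π_j gcd(q_j, n) ≤ A Q^{k(1+δ)}` where `L = lcm(q_1,…,q_k)`. -/
theorem stmt_5 (δ : ℝ) (hδ : 0 < δ) (k : ℕ) :
    ∃ A : ℝ, 0 < A ∧ ∀ Q : ℕ, 1 ≤ Q → ∀ q : Fin k → ℕ,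
      (∀ j, Q ≤ q j ∧ q j < 2 * Q) →
      ((∑ n ∈ Finset.Icc 1 (Finset.univ.lcm q), ∏ j, Nat.gcd (q j) n : ℕ) : ℝ)
        ≤ A * (Q : ℝ) ^ ((k : ℝ) * (1 + δ)) := by
  obtain ⟨C, hC, hτ⟩ := Nat.card_divisors_le_mul_rpow hδ
  refine ⟨(C * 2 ^ (1 + δ)) ^ k, by positivity, fun Q hQ q hq ↦ ?_⟩
  have hq0 : ∀ j, q j ≠ 0 := fun j ↦ by have := (hq j).1; omega
  have hfactor (j : Fin k) :
      (#(q j).divisors : ℝ) * q j ≤ C * 2 ^ (1 + δ) * (Q : ℝ) ^ (1 + δ) :=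
    calc (#(q j).divisors : ℝ) * q j ≤ C * (q j : ℝ) ^ δ * q j := by gcongr; exact hτ _ (hq0 j)
      _ = C * (q j : ℝ) ^ (1 + δ) := by
          rw [Real.rpow_add (by exact_mod_cast Nat.pos_of_ne_zero (hq0 j)), Real.rpow_one]; ring
      _ ≤ C * (2 * Q : ℝ) ^ (1 + δ) := by gcongr; exact_mod_cast (hq j).2.le
      _ = C * 2 ^ (1 + δ) * (Q : ℝ) ^ (1 + δ) := by
          rw [Real.mul_rpow zero_le_two (Nat.cast_nonneg Q)]; ring
  calc ((∑ n ∈ Icc 1 (univ.lcm q), ∏ j, (q j).gcd n : ℕ) : ℝ)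
      ≤ ((∏ j, #(q j).divisors) * ∏ j, q j : ℕ) := by exact_mod_cast sum_prod_gcd_le hq0
    _ = ∏ j, (#(q j).divisors : ℝ) * q j := by push_cast; rw [prod_mul_distrib]
    _ ≤ ∏ _j : Fin k, C * 2 ^ (1 + δ) * (Q : ℝ) ^ (1 + δ) :=
        prod_le_prod (fun _ _ ↦ by positivity) fun j _ ↦ hfactor j
    _ = (C * 2 ^ (1 + δ)) ^ k * (Q : ℝ) ^ ((k : ℝ) * (1 + δ)) := by
        rw [prod_const, card_univ, Fintype.card_fin, mul_pow, mul_comm (k : ℝ),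
          Real.rpow_mul_natCast (Nat.cast_nonneg Q)]
end

section
/- For every δ > 0 and every k ∈ ℕ there is a constant A = A(δ, k) such that for all integers Q ≥ 1, Σ_{(q_1, …, q_k) ∈ ([Q, 2Q) ∩ ℕ)^k} 1 / lcm(q_1, …, q_k) ≤ A · Q^{δ k}. -/
/-!
Group the tuples by `L = lcm q`. Every `q j` divides `L` and `L ≤ (2Q)^k`, so the sum is at most
`∑_{L ≤ (2Q)^k} τ(L)^k / L`. The divisor bound `τ(L) ≪_ε L^ε` (a prime power `p^a`
contributes `a + 1 ≤ p^(εa)` as soon as `p ≥ 2^(1/ε)`) and `∑_{L ≤ X} 1/L ≤ 1 + log X ≪_η X^η`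
bound this by `O(((2Q)^k)^δ) = O(Q^(δk))`.
-/

open Finset

section DivisorBound

variable {ε : ℝ}

lemma natCast_add_one_le_rpow_of_two_le_rpow {x : ℝ} (hx : 0 ≤ x) (h2 : 2 ≤ x ^ ε)
    (a : ℕ) :
    (a + 1 : ℝ) ≤ x ^ (ε * a) :=
  calc (a + 1 : ℝ) ≤ 2 ^ a := by exact_mod_cast Nat.lt_two_pow_self
    _ ≤ (x ^ ε) ^ a := by gcongr
    _ = x ^ (ε * a) := by rw [Real.rpow_mul hx, Real.rpow_natCast]

lemma natCast_add_one_le_mul_rpow (hε : 0 < ε) {x : ℝ} (hx : 2 ≤ x) (a : ℕ) :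
    (a + 1 : ℝ) ≤ ((ε * Real.log 2)⁻¹ + 1) * x ^ (ε * a) := by
  set t := ε * Real.log 2
  have ht : 0 < t := mul_pos hε (Real.log_pos one_lt_two)
  calc (a + 1 : ℝ) ≤ (t⁻¹ + 1) * (a * t + 1) := by
        have : (t⁻¹ + 1) * (a * t + 1) = a + 1 + (t⁻¹ + a * t) := by field_simp; ring
        rw [this]
        linarith [inv_pos.mpr ht, mul_nonneg (Nat.cast_nonneg a) ht.le]
    _ ≤ (t⁻¹ + 1) * Real.exp (a * t) := by gcongr; exact Real.add_one_le_exp _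
    _ = (t⁻¹ + 1) * 2 ^ (ε * a) := by
        rw [Real.rpow_def_of_pos two_pos, show Real.log 2 * (ε * a) = a * t by ring]
    _ ≤ (t⁻¹ + 1) * x ^ (ε * a) := by gcongr

lemma Nat.cast_rpow_eq_prod_primeFactors_s6 {n : ℕ} (hn : n ≠ 0) (ε : ℝ) :
    (n : ℝ) ^ ε = ∏ p ∈ n.primeFactors, (p : ℝ) ^ (ε * n.factorization p) := by
  conv_lhs => rw [Nat.prod_primeFactors_pow_factorization hn]
  push_cast
  rw [← Real.finsetProd_rpow _ _ (fun p _ => by positivity)]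
  refine prod_congr rfl fun p _ => ?_
  rw [← Real.rpow_natCast, ← Real.rpow_mul (Nat.cast_nonneg p), mul_comm]

theorem Nat.card_divisors_le_mul_rpow_s6 (hε : 0 < ε) :
    ∃ C : ℝ, 0 < C ∧ ∀ n : ℕ, n ≠ 0 → (#n.divisors : ℝ) ≤ C * (n : ℝ) ^ ε := by
  set B := (ε * Real.log 2)⁻¹ + 1
  have hB : 1 ≤ B :=
    le_add_of_nonneg_left (inv_nonneg.mpr (mul_pos hε (Real.log_pos one_lt_two)).le)
  set P := ⌈(2 : ℝ) ^ ε⁻¹⌉₊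
  refine ⟨B ^ P, by positivity, fun n hn => ?_⟩
  -- For `p ≥ P` already `a + 1 ≤ 2 ^ a ≤ p ^ (ε a)`; only primes below `P` cost a factor `B`.
  have local_bound : ∀ p ∈ n.primeFactors, ((n.factorization p + 1 : ℕ) : ℝ) ≤
      (if p < P then B else 1) * (p : ℝ) ^ (ε * n.factorization p) := by
    intro p hp
    push_cast
    split_ifs with hpP
    · exact natCast_add_one_le_mul_rpow hε
        (by exact_mod_cast (Nat.prime_of_mem_primeFactors hp).two_le) _
    · have hPp : (2 : ℝ) ^ ε⁻¹ ≤ p :=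
        (Nat.le_ceil _).trans (by exact_mod_cast not_lt.mp hpP)
      have h2 : 2 ≤ (p : ℝ) ^ ε := by
        calc (2 : ℝ) = ((2 : ℝ) ^ ε⁻¹) ^ ε := by
              rw [← Real.rpow_mul zero_le_two, inv_mul_cancel₀ hε.ne', Real.rpow_one]
          _ ≤ (p : ℝ) ^ ε := by gcongr
      rw [one_mul]
      exact natCast_add_one_le_rpow_of_two_le_rpow (Nat.cast_nonneg p) h2 _
  have small_primes : ∏ p ∈ n.primeFactors, (if p < P then B else 1) ≤ B ^ P := by
    rw [← prod_filter, prod_const]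
    refine pow_le_pow_right₀ hB ((card_le_card fun p hp => ?_).trans (card_range P).le)
    exact mem_range.mpr (mem_filter.mp hp).2
  calc (#n.divisors : ℝ) = ∏ p ∈ n.primeFactors, ((n.factorization p + 1 : ℕ) : ℝ) := by
        rw [Nat.card_divisors hn]; push_cast; rfl
    _ ≤ ∏ p ∈ n.primeFactors,
          (if p < P then B else 1) * (p : ℝ) ^ (ε * n.factorization p) :=
        prod_le_prod (fun _ _ => by positivity) local_bound
    _ ≤ B ^ P * (n : ℝ) ^ ε := by
        rw [prod_mul_distrib, Nat.cast_rpow_eq_prod_primeFactors_s6 hn]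
        gcongr

end DivisorBound

lemma sum_Icc_inv_le_mul_rpow {η : ℝ} (hη : 0 < η) {N : ℕ} (hN : 1 ≤ N) :
    ∑ d ∈ Icc 1 N, (d : ℝ)⁻¹ ≤ (1 + η⁻¹) * (N : ℝ) ^ η := by
  have harmonic_eq : ∑ d ∈ Icc 1 N, (d : ℝ)⁻¹ = harmonic N := by
    rw [harmonic_eq_sum_Icc]; push_cast; rfl
  calc ∑ d ∈ Icc 1 N, (d : ℝ)⁻¹ ≤ 1 + Real.log N := by
        rw [harmonic_eq]; exact_mod_cast harmonic_le_one_add_log N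
    _ ≤ (N : ℝ) ^ η + (N : ℝ) ^ η / η :=
        add_le_add (Real.one_le_rpow (by exact_mod_cast hN) hη.le)
          (Real.log_natCast_le_rpow_div N hη)
    _ = (1 + η⁻¹) * (N : ℝ) ^ η := by ring

theorem sum_Icc_card_divisors_pow_div_le (k : ℕ) {η : ℝ} (hη : 0 < η) :
    ∃ C : ℝ, 0 < C ∧ ∀ N : ℕ, 1 ≤ N →
      ∑ d ∈ Icc 1 N, (#d.divisors : ℝ) ^ k / d ≤ C * (N : ℝ) ^ η := by
  set ε := η / (2 * (k + 1))
  have hε : 0 < ε := by positivity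
  have hεk : ε * k ≤ η / 2 := by
    calc ε * k ≤ ε * (k + 1) := by gcongr; linarith
      _ = η / 2 := by simp only [ε]; field_simp
  obtain ⟨C₀, hC₀, hτ⟩ := Nat.card_divisors_le_mul_rpow_s6 hε
  refine ⟨C₀ ^ k * (1 + (η / 2)⁻¹), by positivity, fun N hN => ?_⟩
  have hN' : (1 : ℝ) ≤ N := by exact_mod_cast hN
  have pointwise :
      ∀ d ∈ Icc 1 N, (#d.divisors : ℝ) ^ k ≤ C₀ ^ k * (N : ℝ) ^ (η / 2) := by
    intro d hd
    obtain ⟨hd1, hdN⟩ := mem_Icc.mp hd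
    calc (#d.divisors : ℝ) ^ k ≤ (C₀ * (d : ℝ) ^ ε) ^ k := by
          gcongr; exact hτ d (by omega)
      _ ≤ C₀ ^ k * ((N : ℝ) ^ ε) ^ k := by rw [mul_pow]; gcongr
      _ ≤ C₀ ^ k * (N : ℝ) ^ (η / 2) := by
          rw [← Real.rpow_mul_natCast (by positivity)]
          gcongr
  calc ∑ d ∈ Icc 1 N, (#d.divisors : ℝ) ^ k / d
      ≤ ∑ d ∈ Icc 1 N, C₀ ^ k * (N : ℝ) ^ (η / 2) * (d : ℝ)⁻¹ :=
        sum_le_sum fun d hd => by rw [div_eq_mul_inv]; gcongr; exact pointwise d hd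
    _ = C₀ ^ k * (N : ℝ) ^ (η / 2) * ∑ d ∈ Icc 1 N, (d : ℝ)⁻¹ := (mul_sum _ _ _).symm
    _ ≤ C₀ ^ k * (N : ℝ) ^ (η / 2) * ((1 + (η / 2)⁻¹) * (N : ℝ) ^ (η / 2)) := by
        gcongr; exact sum_Icc_inv_le_mul_rpow (by positivity) hN
    _ = C₀ ^ k * (1 + (η / 2)⁻¹) * (N : ℝ) ^ η := by
        rw [mul_mul_mul_comm, ← Real.rpow_add (by positivity), add_halves, mul_assoc]

section Lcm

variable {ι : Type*} [Fintype ι]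

lemma Finset.lcm_mem_Icc_of_forall_mem_Icc {M : ℕ} {q : ι → ℕ}
    (hq : ∀ j, q j ∈ Icc 1 M) :
    univ.lcm q ∈ Icc 1 (M ^ Fintype.card ι) := by
  have hpos : ∀ j, 0 < q j := fun j => (mem_Icc.mp (hq j)).1
  refine mem_Icc.mpr ⟨Nat.pos_of_ne_zero fun h => ?_, ?_⟩
  · obtain ⟨j, -, hj⟩ := lcm_eq_zero_iff.mp h
    exact (hpos j).ne' hj
  · calc univ.lcm q ≤ ∏ j, q j := Nat.le_of_dvd (prod_pos fun j _ => hpos j) (lcm_dvd_prod _ _)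
      _ ≤ M ^ Fintype.card ι := prod_le_pow_card _ _ _ fun j _ => (mem_Icc.mp (hq j)).2

variable [DecidableEq ι]

lemma Finset.card_filter_lcm_eq_le (S : Finset (ι → ℕ)) {d : ℕ} (hd : d ≠ 0) :
    #{q ∈ S | univ.lcm q = d} ≤ #d.divisors ^ Fintype.card ι := by
  calc #{q ∈ S | univ.lcm q = d} ≤ #(Fintype.piFinset fun _ : ι => d.divisors) := by
        refine card_le_card fun q hq => Fintype.mem_piFinset.mpr fun j => ?_
        obtain ⟨-, hlcm⟩ := mem_filter.mp hq
        exact Nat.mem_divisors.mpr ⟨hlcm ▸ dvd_lcm (mem_univ j), hd⟩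
    _ = #d.divisors ^ Fintype.card ι := by rw [Fintype.card_piFinset, prod_const, card_univ]

lemma Finset.sum_inv_lcm_le_sum_card_divisors_pow_div (S : Finset (ι → ℕ)) {N : ℕ}
    (hS : ∀ q ∈ S, univ.lcm q ∈ Icc 1 N) :
    ∑ q ∈ S, ((univ.lcm q : ℕ) : ℝ)⁻¹ ≤
      ∑ d ∈ Icc 1 N, (#d.divisors : ℝ) ^ Fintype.card ι / d := by
  rw [← sum_fiberwise_of_maps_to hS]
  refine sum_le_sum fun d hd => ?_
  have hd0 : d ≠ 0 := by have := (mem_Icc.mp hd).1; omega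
  calc ∑ q ∈ S with univ.lcm q = d, ((univ.lcm q : ℕ) : ℝ)⁻¹
      = #{q ∈ S | univ.lcm q = d} / d := by
        rw [sum_congr rfl fun q hq => by rw [(mem_filter.mp hq).2], sum_const, nsmul_eq_mul,
          div_eq_mul_inv]
    _ ≤ (#d.divisors : ℝ) ^ Fintype.card ι / d := by
        gcongr; exact_mod_cast card_filter_lcm_eq_le S hd0

end Lcm

/-- For all `δ > 0` and `k ∈ ℕ` there is `A = A(δ,k)` such that for all `Q ≥ 1`,
`Σ_{(q_1,…,q_k) ∈ [Q,2Q)^k} 1 / lcm(q_1,…,q_k) ≤ A Q^{δk}`. -/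
theorem stmt_6 (δ : ℝ) (hδ : 0 < δ) (k : ℕ) :
    ∃ A : ℝ, 0 < A ∧ ∀ Q : ℕ, 1 ≤ Q →
      (∑ q ∈ Fintype.piFinset fun _ : Fin k => Finset.Ico Q (2 * Q),
          ((Finset.univ.lcm q : ℕ) : ℝ)⁻¹)
        ≤ A * (Q : ℝ) ^ (δ * (k : ℝ)) := by
  obtain ⟨C, hC, hsum⟩ := sum_Icc_card_divisors_pow_div_le k hδ
  refine ⟨C * 2 ^ (δ * k), by positivity, fun Q hQ => ?_⟩
  have lcm_mem : ∀ q ∈ Fintype.piFinset fun _ : Fin k => Ico Q (2 * Q),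
      univ.lcm q ∈ Icc 1 ((2 * Q) ^ k) := by
    intro q hq
    simpa using lcm_mem_Icc_of_forall_mem_Icc (q := q) (M := 2 * Q) fun j => by
      have := mem_Ico.mp (Fintype.mem_piFinset.mp hq j)
      exact mem_Icc.mpr ⟨by omega, by omega⟩
  calc _ ≤ ∑ d ∈ Icc 1 ((2 * Q) ^ k), (#d.divisors : ℝ) ^ k / d := by
        simpa using sum_inv_lcm_le_sum_card_divisors_pow_div _ lcm_mem
    _ ≤ C * (((2 * Q) ^ k : ℕ) : ℝ) ^ δ := hsum _ (Nat.one_le_pow _ _ (by omega))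
    _ = C * 2 ^ (δ * k) * (Q : ℝ) ^ (δ * k) := by
        rw [Nat.cast_pow, ← Real.rpow_natCast, ← Real.rpow_mul (by positivity), Nat.cast_mul,
          Real.mul_rpow (by positivity) (by positivity), mul_comm (k : ℝ) δ]
        push_cast; ring
end
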